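/- The number of compositions of n into odd parts equals the number of compositions of n+1 into parts greater than one. -/

import Mathlib

/-!
A word `w` over the alphabet `{a, b}` encodes a composition with parts in `a + bℕ`: in the word
`w ++ [a]`, every maximal run `b^k` together with the `a` that ends it is the part `a + k b`, so
the parts sum to `w.sum + a`. For `(a, b) = (1, 2)` and `(a, b) = (2, 1)` this identifies odd
compositions of `m + 1` and compositions of `m + 2` into parts `≥ 2` with the same words in the
letters `1` and `2` summing to `m`.
-/

open List

section WordParts

variable (a b : ℕ)

def partsOfWord : List ℕ → List ℕ
  | [] => [a]
  | x :: w => if x = a then a :: partsOfWord w else (partsOfWord w).modifyHead (· + b)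

def wordOfParts : List ℕ → List ℕ
  | [] => []
  | [c] => replicate ((c - a) / b) b
  | c :: d :: l => replicate ((c - a) / b) b ++ a :: wordOfParts (d :: l)

theorem partsOfWord_ne_nil (w : List ℕ) : partsOfWord a b w ≠ [] := by
  induction w with
  | nil => simp [partsOfWord]
  | cons x w ih =>
    obtain ⟨c, l, hcl⟩ := exists_cons_of_ne_nil ih
    unfold partsOfWord
    split_ifs <;> simp [hcl]

variable {a b}

theorem exists_eq_add_mul_of_mem_partsOfWord {w : List ℕ} {c : ℕ} (hc : c ∈ partsOfWord a b w) :
    ∃ k, c = a + b * k := by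
  induction w generalizing c with
  | nil => exact ⟨0, by simpa [partsOfWord] using hc⟩
  | cons x w ih =>
    obtain ⟨d, l, hdl⟩ := exists_cons_of_ne_nil (partsOfWord_ne_nil a b w)
    unfold partsOfWord at hc
    split_ifs at hc
    · rcases mem_cons.mp hc with rfl | hc
      · exact ⟨0, by simp⟩
      · exact ih hc
    · rw [hdl, modifyHead_cons, mem_cons] at hc
      rcases hc with rfl | hc
      · obtain ⟨k, rfl⟩ := ih (hdl ▸ mem_cons_self)
        exact ⟨k + 1, by ring⟩
      · exact ih (hdl ▸ mem_cons_of_mem d hc)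

theorem sum_partsOfWord {w : List ℕ} (hw : ∀ x ∈ w, x = a ∨ x = b) :
    (partsOfWord a b w).sum = w.sum + a := by
  induction w with
  | nil => simp [partsOfWord]
  | cons x w ih =>
    obtain ⟨d, l, hdl⟩ := exists_cons_of_ne_nil (partsOfWord_ne_nil a b w)
    have ih := ih fun y hy => hw y (mem_cons_of_mem x hy)
    unfold partsOfWord
    split_ifs with hx
    · simp only [sum_cons, ih, hx]
      ring
    · have hxb : x = b := (hw x mem_cons_self).resolve_left hx
      rw [hdl] at ih ⊢
      simp only [modifyHead_cons, sum_cons] at ih ⊢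
      omega

theorem partsOfWord_replicate_append (hab : a ≠ b) (k : ℕ) (w : List ℕ) :
    partsOfWord a b (replicate k b ++ w) = (partsOfWord a b w).modifyHead (· + b * k) := by
  obtain ⟨d, l, hdl⟩ := exists_cons_of_ne_nil (partsOfWord_ne_nil a b w)
  induction k with
  | zero => simp [hdl]
  | succ k ih =>
    rw [replicate_succ, cons_append, partsOfWord, if_neg hab.symm, ih, hdl]
    simp only [modifyHead_cons]
    ring_nf

theorem wordOfParts_add_cons (hb : 0 < b) {c : ℕ} (hc : a ≤ c) (l : List ℕ) :
    wordOfParts a b ((c + b) :: l) = b :: wordOfParts a b (c :: l) := by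
  have hk : (c + b - a) / b = (c - a) / b + 1 := by
    rw [show c + b - a = c - a + b by omega, Nat.add_div_right _ hb]
  cases l <;> simp [wordOfParts, hk, replicate_succ]

theorem wordOfParts_partsOfWord (hb : 0 < b) {w : List ℕ} (hw : ∀ x ∈ w, x = a ∨ x = b) :
    wordOfParts a b (partsOfWord a b w) = w := by
  induction w with
  | nil => simp [partsOfWord, wordOfParts]
  | cons x w ih =>
    obtain ⟨d, l, hdl⟩ := exists_cons_of_ne_nil (partsOfWord_ne_nil a b w)
    have ih := ih fun y hy => hw y (mem_cons_of_mem x hy)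
    rw [hdl] at ih
    unfold partsOfWord
    split_ifs with hx
    · simp [hdl, wordOfParts, ih, hx]
    · have hxb : x = b := (hw x mem_cons_self).resolve_left hx
      obtain ⟨k, hk⟩ :=
        exists_eq_add_mul_of_mem_partsOfWord (hdl ▸ mem_cons_self : d ∈ partsOfWord a b w)
      rw [hdl, modifyHead_cons, wordOfParts_add_cons hb (by omega), ih, hxb]

theorem partsOfWord_wordOfParts (hab : a ≠ b) (hb : 0 < b) {l : List ℕ} (hl : l ≠ [])
    (hparts : ∀ c ∈ l, ∃ k, c = a + b * k) : partsOfWord a b (wordOfParts a b l) = l := by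
  induction l with
  | nil => exact absurd rfl hl
  | cons c l ih =>
    obtain ⟨k, rfl⟩ := hparts c mem_cons_self
    have hk : (a + b * k - a) / b = k := by
      rw [Nat.add_sub_cancel_left, Nat.mul_div_cancel_left _ hb]
    cases l with
    | nil =>
      rw [wordOfParts, hk, ← append_nil (replicate k b), partsOfWord_replicate_append hab]
      simp [partsOfWord]
    | cons d l =>
      rw [wordOfParts, hk, partsOfWord_replicate_append hab, partsOfWord, if_pos rfl,
        ih (cons_ne_nil d l) fun c hc => hparts c (mem_cons_of_mem _ hc), modifyHead_cons]

theorem mem_wordOfParts {l : List ℕ} {x : ℕ} (hx : x ∈ wordOfParts a b l) : x = a ∨ x = b := by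
  induction l using wordOfParts.induct with
  | case1 => simp [wordOfParts] at hx
  | case2 c => exact Or.inr (eq_of_mem_replicate hx)
  | case3 c d l ih =>
    simp only [wordOfParts, mem_append, mem_cons] at hx
    rcases hx with hx | hx | hx
    · exact Or.inr (eq_of_mem_replicate hx)
    · exact Or.inl hx
    · exact ih hx


theorem card_parts_eq_card_words (hab : a ≠ b) (ha : 0 < a) (hb : 0 < b) (m : ℕ) :
    Nat.card {l : List ℕ // l.sum = m + a ∧ ∀ c ∈ l, ∃ k, c = a + b * k} =
      Nat.card {w : List ℕ // w.sum = m ∧ ∀ x ∈ w, x = a ∨ x = b} := by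
  have ne_nil {l : List ℕ} (hl : l.sum = m + a) : l ≠ [] := by
    rintro rfl
    simp at hl
    omega
  refine Nat.card_congr
    { toFun := fun l => ⟨wordOfParts a b l, ?_, fun x => mem_wordOfParts⟩
      invFun := fun w => ⟨partsOfWord a b w, by rw [sum_partsOfWord w.2.2, w.2.1],
        fun c => exists_eq_add_mul_of_mem_partsOfWord⟩
      left_inv := fun l => Subtype.ext (partsOfWord_wordOfParts hab hb (ne_nil l.2.1) l.2.2)
      right_inv := fun w => Subtype.ext (wordOfParts_partsOfWord hb w.2.2) }
  have h := sum_partsOfWord (a := a) (b := b) fun _ => mem_wordOfParts (l := l.1)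
  rw [partsOfWord_wordOfParts hab hb (ne_nil l.2.1) l.2.2, l.2.1] at h
  omega

end WordParts

/-- The number of compositions of `n` into odd parts equals the number of
compositions of `n+1` into parts greater than one. -/
theorem odd_comps_eq_gt_one_comps (n : ℕ) (hn : 1 ≤ n) :
    Nat.card {l : List ℕ // l.sum = n ∧ ∀ x ∈ l, Odd x} =
    Nat.card {l : List ℕ // l.sum = n + 1 ∧ ∀ x ∈ l, 2 ≤ x} := by
  obtain ⟨m, rfl⟩ : ∃ m, n = m + 1 := ⟨n - 1, by omega⟩
  have odd_iff (x : ℕ) : Odd x ↔ ∃ k, x = 1 + 2 * k := by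
    simp only [odd_iff_exists_bit1, add_comm]
  have two_le_iff (x : ℕ) : 2 ≤ x ↔ ∃ k, x = 2 + 1 * k :=
    ⟨fun h => ⟨x - 2, by omega⟩, by rintro ⟨k, rfl⟩; omega⟩
  simp_rw [odd_iff, two_le_iff, add_assoc m 1 1, one_add_one_eq_two]
  rw [card_parts_eq_card_words (by decide) one_pos two_pos,
    card_parts_eq_card_words (by decide) two_pos one_pos]
  simp_rw [or_comm]
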